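/- For n ≥ 2 and d ≥ 1, a finite subset S of the positive integers is the β-set of an (n, dn-1)-core partition with distinct parts if and only if: (iv) S ⊆ {(i-1)n + j : 1 ≤ i ≤ d, 1 ≤ j ≤ n-2} ∪ {in - 1 : 1 ≤ i ≤ d-1}; (v) if in + j ∈ S with i ≥ 1 and 1 ≤ j ≤ n-1, then (i-1)n + j ∈ S; and (vi) if j ∈ S with 1 ≤ j ≤ n-2, then j+1 ∉ S. -/

import Mathlib

def hook (Y : YoungDiagram) (i j : ℕ) : ℕ :=
  (Y.rowLen i - j) + (Y.colLen j - i) - 1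

def IsCore (Y : YoungDiagram) (t : ℕ) : Prop :=
  ∀ c ∈ Y.cells, ¬ (t ∣ hook Y c.1 c.2)

def DistinctParts (Y : YoungDiagram) : Prop :=
  ∀ i : ℕ, 0 < Y.rowLen (i + 1) → Y.rowLen (i + 1) < Y.rowLen i

def betaSet (Y : YoungDiagram) : Finset ℕ :=
  (Finset.range (Y.colLen 0)).image (fun i => Y.rowLen i + (Y.colLen 0 - 1 - i))

/-!
The hook lengths of a Young diagram are exactly the differences `b - x` with `b` a β-number and
`x < b` not a β-number. Hence `Y` is a `t`-core iff its β-set is closed under subtracting `t`,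
and `Y` has distinct parts iff its β-set contains no two consecutive integers; every finite set
avoiding `0` is a β-set. Closure under `n` makes `S` avoid multiples of `n`; with closure under
`dn - 1` and the absence of consecutive elements it also forces `S` below `dn - 1`, and these two
properties together are (iv). Conversely, under (iv) closure under `dn - 1` is vacuous, (v) is
closure under `n`, and two consecutive elements of `S` would reduce modulo `n` to consecutive
residues in `S`, which (vi) excludes.
-/

def SubClosed (S : Finset ℕ) (t : ℕ) : Prop :=
  ∀ b ∈ S, t ≤ b → b - t ∈ S

namespace SubClosed

variable {S : Finset ℕ} {t : ℕ}

theorem sub_mul_mem (h : SubClosed S t) {b : ℕ} (hb : b ∈ S) : ∀ k, k * t ≤ b → b - k * t ∈ S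
  | 0, _ => by simpa using hb
  | k + 1, hk => by
    rw [Nat.succ_mul] at hk ⊢
    rw [← Nat.sub_sub]
    exact h _ (sub_mul_mem h hb k (by omega)) (by omega)

theorem mul (h : SubClosed S t) (k : ℕ) : SubClosed S (k * t) :=
  fun _ hb => h.sub_mul_mem hb k

theorem mod_mem (h : SubClosed S t) {b : ℕ} (hb : b ∈ S) : b % t ∈ S := by
  rw [Nat.mod_def, mul_comm]
  exact h.sub_mul_mem hb _ (Nat.div_mul_le_self b t)

theorem iff_not_dvd_sub (ht : 0 < t) :
    SubClosed S t ↔ ∀ b ∈ S, ∀ x ∉ S, x < b → ¬ t ∣ b - x := by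
  constructor
  · rintro h b hb x hx hxb ⟨k, hk⟩
    have := h.sub_mul_mem hb k (by rw [mul_comm]; omega)
    rw [mul_comm, ← hk, Nat.sub_sub_self hxb.le] at this
    exact hx this
  · intro h b hb htb
    by_contra hbt
    exact h b hb _ hbt (by omega) (by rw [Nat.sub_sub_self htb])

theorem forall_mem_lt (hS : 0 ∉ S) (hgap : ∀ b ∈ S, b + 1 ∉ S) {m : ℕ}
    (hm : SubClosed S m) (hm' : SubClosed S (m + 1)) : ∀ x ∈ S, x < m := by
  intro x hx
  by_contra! hmx
  rcases hmx.eq_or_lt with hxm | hmx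
  · exact hS (by simpa [hxm] using hm x hx hmx)
  · have h := hgap _ (hm' x hx hmx)
    rw [show x - (m + 1) + 1 = x - m by omega] at h
    exact h (hm x hx hmx.le)

end SubClosed

theorem Fin.monotone_sub_val_of_strictMono {ℓ : ℕ} {f : Fin ℓ → ℕ} (hf : StrictMono f) :
    Monotone fun k => f k - k := by
  cases ℓ with
  | zero => exact fun a => a.elim0
  | succ m =>
    refine Fin.monotone_iff_le_succ.mpr fun k => ?_
    have := hf k.castSucc_lt_succ
    simp only [Fin.val_castSucc, Fin.val_succ]
    omega

namespace YoungDiagram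

variable {Y : YoungDiagram} {i j : ℕ}

def beta (Y : YoungDiagram) (i : ℕ) : ℕ :=
  Y.rowLen i + (Y.colLen 0 - 1 - i)

def nonBeta (Y : YoungDiagram) (j : ℕ) : ℕ :=
  Y.colLen 0 - Y.colLen j + j

theorem lt_rowLen_iff_lt_colLen : j < Y.rowLen i ↔ i < Y.colLen j :=
  mem_iff_lt_rowLen.symm.trans mem_iff_lt_colLen

theorem colLen_le_colLen_zero (j : ℕ) : Y.colLen j ≤ Y.colLen 0 :=
  Y.colLen_anti 0 j j.zero_le

theorem mem_betaSet {b : ℕ} : b ∈ betaSet Y ↔ ∃ i < Y.colLen 0, Y.beta i = b := by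
  simp [betaSet, beta]

theorem beta_mem_betaSet (hi : i < Y.colLen 0) : Y.beta i ∈ betaSet Y :=
  mem_betaSet.mpr ⟨i, hi, rfl⟩

theorem beta_lt_beta {k : ℕ} (hik : i < k) (hk : k < Y.colLen 0) : Y.beta k < Y.beta i := by
  have := Y.rowLen_anti i k hik.le
  have : 0 < Y.rowLen k := lt_rowLen_iff_lt_colLen.mpr hk
  unfold beta
  omega

theorem nonBeta_not_mem_betaSet (j : ℕ) : Y.nonBeta j ∉ betaSet Y := by
  intro h
  obtain ⟨k, hk, heq⟩ := mem_betaSet.mp h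
  have := colLen_le_colLen_zero (Y := Y) j
  have := lt_rowLen_iff_lt_colLen (Y := Y) (i := k) (j := j)
  unfold beta nonBeta at heq
  omega

theorem nonBeta_lt_beta (h : (i, j) ∈ Y) : Y.nonBeta j < Y.beta i := by
  have := mem_iff_lt_rowLen.mp h
  have := mem_iff_lt_colLen.mp h
  have := colLen_le_colLen_zero (Y := Y) j
  unfold nonBeta beta
  omega

theorem hook_eq_beta_sub_nonBeta (h : (i, j) ∈ Y) : hook Y i j = Y.beta i - Y.nonBeta j := by
  have := mem_iff_lt_rowLen.mp h
  have := mem_iff_lt_colLen.mp h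
  have := colLen_le_colLen_zero (Y := Y) j
  unfold hook nonBeta beta
  omega

/-- Take `j` maximal with `nonBeta j ≤ x`: if `x ≠ nonBeta j`, then row `colLen 0 + j - x` has
length exactly `j + 1` and its β-number is `x`. -/
theorem exists_nonBeta_eq {x : ℕ} (hi : i < Y.colLen 0) (hx : x < Y.beta i)
    (hxb : x ∉ betaSet Y) : ∃ j < Y.rowLen i, Y.nonBeta j = x := by
  have hex : ∃ j, x < Y.nonBeta (j + 1) := ⟨x, by unfold nonBeta; omega⟩
  set j := Nat.find hex
  have hlt : x < Y.nonBeta (j + 1) := Nat.find_spec hex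
  have hle : Y.nonBeta j ≤ x := by
    rcases hj : j with _ | j'
    · simp [nonBeta]
    · simpa using Nat.find_min hex (m := j') (by omega)
  have := colLen_le_colLen_zero (Y := Y) j
  have := Y.colLen_anti j (j + 1) j.le_succ
  unfold nonBeta at hle hlt
  rcases hle.eq_or_lt with hxj | hxj
  · refine ⟨j, ?_, hxj⟩
    by_contra! hrow
    have : Y.colLen j ≤ i := by
      by_contra!
      exact (lt_rowLen_iff_lt_colLen.mpr this).not_ge hrow
    unfold beta at hx
    omega
  · have hr : j < Y.rowLen (Y.colLen 0 + j - x) := lt_rowLen_iff_lt_colLen.mpr (by omega)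
    have hr' : ¬ j + 1 < Y.rowLen (Y.colLen 0 + j - x) := by
      rw [lt_rowLen_iff_lt_colLen]; omega
    exact absurd (mem_betaSet.mpr ⟨Y.colLen 0 + j - x, by omega, by unfold beta; omega⟩) hxb

theorem isCore_iff_not_dvd_sub {t : ℕ} :
    IsCore Y t ↔ ∀ b ∈ betaSet Y, ∀ x ∉ betaSet Y, x < b → ¬ t ∣ b - x := by
  constructor
  · intro hcore b hb x hx hxb hdvd
    obtain ⟨i, hi, rfl⟩ := mem_betaSet.mp hb
    obtain ⟨j, hj, rfl⟩ := exists_nonBeta_eq hi hxb hx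
    have hij : (i, j) ∈ Y := mem_iff_lt_rowLen.mpr hj
    exact hcore (i, j) ((mem_cells _).mpr hij) (hook_eq_beta_sub_nonBeta hij ▸ hdvd)
  · rintro h ⟨i, j⟩ hij
    rw [mem_cells] at hij
    rw [hook_eq_beta_sub_nonBeta hij]
    exact h _ (beta_mem_betaSet ((mem_iff_lt_colLen.mp hij).trans_le (colLen_le_colLen_zero j)))
      _ (nonBeta_not_mem_betaSet j) (nonBeta_lt_beta hij)

theorem isCore_iff_subClosed {t : ℕ} (ht : 0 < t) : IsCore Y t ↔ SubClosed (betaSet Y) t :=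
  isCore_iff_not_dvd_sub.trans (SubClosed.iff_not_dvd_sub ht).symm

theorem distinctParts_iff : DistinctParts Y ↔ ∀ b ∈ betaSet Y, b + 1 ∉ betaSet Y := by
  constructor
  · intro hd b hb hb1
    obtain ⟨k, hk, rfl⟩ := mem_betaSet.mp hb
    obtain ⟨i, hi, hik⟩ := mem_betaSet.mp hb1
    have hlt : i < k := by
      by_contra! h
      rcases h.eq_or_lt with rfl | h
      · omega
      · have := beta_lt_beta h hi
        omega
    have hk' : k = i + 1 := by
      by_contra
      have := beta_lt_beta (by omega : i < i + 1) (show i + 1 < Y.colLen 0 by omega)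
      have := beta_lt_beta (show i + 1 < k by omega) hk
      omega
    subst hk'
    have := hd i (lt_rowLen_iff_lt_colLen.mpr hk)
    unfold beta at hik
    omega
  · intro h i hpos
    have hi : i + 1 < Y.colLen 0 := lt_rowLen_iff_lt_colLen.mp hpos
    refine (Y.rowLen_anti i (i + 1) i.le_succ).lt_of_ne fun heq => ?_
    refine h _ (beta_mem_betaSet hi) ?_
    convert beta_mem_betaSet (Y := Y) (i := i) (by omega) using 1
    unfold beta
    omega

/-- The rows are `λ_i = s_i - (ℓ - 1 - i)` for the elements `s_0 > ⋯ > s_{ℓ-1}` of `S`. -/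
theorem exists_betaSet_eq {S : Finset ℕ} (hS : 0 ∉ S) : ∃ Y : YoungDiagram, betaSet Y = S := by
  set ℓ := S.card
  set f := S.orderEmbOfFin rfl
  have hg := Fin.monotone_sub_val_of_strictMono f.strictMono
  have hf : ∀ k : Fin ℓ, k < f k := fun k => by
    have h0 : f ⟨0, k.pos⟩ ≠ 0 := fun h => hS (h ▸ S.orderEmbOfFin_mem rfl _)
    have := hg (show (⟨0, k.pos⟩ : Fin ℓ) ≤ k from Nat.zero_le _)
    simp only at this
    omega
  set w := List.ofFn fun k : Fin ℓ => f k.rev - k.rev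
  have hw : w.SortedGE := List.sortedGE_ofFn_iff.mpr (hg.comp_antitone Fin.rev_anti)
  have hpos : ∀ x ∈ w, 0 < x := by
    simp only [w, List.mem_ofFn, forall_exists_index]
    rintro _ k rfl
    have := hf k.rev
    omega
  set Y := ofRowLens w hw
  have hcol : Y.colLen 0 = ℓ := by
    rw [← length_rowLens, rowLens_ofRowLens_eq_self hpos, List.length_ofFn]
  have hbeta : ∀ k : Fin ℓ, Y.beta k = f k.rev := fun k => by
    have hrow : Y.rowLen k = f k.rev - k.rev := by
      simpa [Y, w] using rowLen_ofRowLens (w := w) (hw := hw) ⟨k, by simp [w]⟩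
    have := hf k.rev
    simp only [beta, hrow, hcol, Fin.val_rev] at this ⊢
    omega
  refine ⟨Y, Finset.ext fun b => ?_⟩
  rw [mem_betaSet, hcol, ← Finset.mem_coe, ← S.range_orderEmbOfFin rfl]
  constructor
  · rintro ⟨i, hi, rfl⟩
    exact ⟨(⟨i, hi⟩ : Fin ℓ).rev, (hbeta ⟨i, hi⟩).symm⟩
  · rintro ⟨k, rfl⟩
    exact ⟨k.rev, k.rev.is_lt, by rw [hbeta k.rev, Fin.rev_rev]⟩

end YoungDiagram

theorem blockForm_iff {n d : ℕ} (hn : 2 ≤ n) (x : ℕ) :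
    ((∃ i j : ℕ, 1 ≤ i ∧ i ≤ d ∧ 1 ≤ j ∧ j ≤ n - 2 ∧ x = (i - 1) * n + j) ∨
        (∃ i : ℕ, 1 ≤ i ∧ i ≤ d - 1 ∧ x = i * n - 1)) ↔
      x % n ≠ 0 ∧ x + 1 < d * n := by
  constructor
  · rintro (⟨i, j, hi, hid, hj, hjn, rfl⟩ | ⟨i, hi, hid, rfl⟩)
    · have hin : i * n ≤ d * n := Nat.mul_le_mul_right n hid
      have : n ≤ i * n := Nat.le_mul_of_pos_left n hi
      rw [add_comm, Nat.add_mul_mod_self_right, Nat.mod_eq_of_lt (by omega), Nat.sub_one_mul]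
      omega
    · have hin : i * n + n ≤ d * n := by
        rw [← Nat.succ_mul]; exact Nat.mul_le_mul_right n (by omega)
      have : n ≤ i * n := Nat.le_mul_of_pos_left n hi
      rw [show i * n - 1 = (n - 1) + (i - 1) * n by rw [Nat.sub_one_mul]; omega,
        Nat.add_mul_mod_self_right, Nat.mod_eq_of_lt (by omega), Nat.sub_one_mul]
      omega
  · rintro ⟨hx, hxd⟩
    have hdiv := Nat.div_add_mod' x n
    have hmod := Nat.mod_lt x (by omega : 0 < n)
    generalize x / n = q at hdiv
    generalize x % n = r at hdiv hmod hx ⊢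
    by_cases hr : r ≤ n - 2
    · have : q < d := Nat.lt_of_mul_lt_mul_right (a := n) (by omega)
      exact Or.inl ⟨q + 1, r, by omega, by omega, by omega, hr, by simp; omega⟩
    · have : q + 1 < d := Nat.lt_of_mul_lt_mul_right (a := n) (by rw [Nat.succ_mul]; omega)
      exact Or.inr ⟨q + 1, by omega, by omega, by rw [Nat.succ_mul]; omega⟩

theorem noConsecutive_and_subClosed_iff {n d : ℕ} (hn : 2 ≤ n) (hd : 1 ≤ d) {S : Finset ℕ}
    (hS : 0 ∉ S) :
    ((∀ b ∈ S, b + 1 ∉ S) ∧ SubClosed S n ∧ SubClosed S (d * n - 1)) ↔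
      ((∀ x ∈ S, (∃ i j : ℕ, 1 ≤ i ∧ i ≤ d ∧ 1 ≤ j ∧ j ≤ n - 2 ∧ x = (i - 1) * n + j) ∨
          (∃ i : ℕ, 1 ≤ i ∧ i ≤ d - 1 ∧ x = i * n - 1)) ∧
       (∀ i j : ℕ, 1 ≤ i → 1 ≤ j → j ≤ n - 1 → i * n + j ∈ S → (i - 1) * n + j ∈ S) ∧
       (∀ j : ℕ, 1 ≤ j → j ≤ n - 2 → j ∈ S → j + 1 ∉ S)) := by
  have hdn : n ≤ d * n := Nat.le_mul_of_pos_left n hd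
  simp only [blockForm_iff hn]
  constructor
  · rintro ⟨hgap, hcn, hcm⟩
    have hlt := hcm.forall_mem_lt hS hgap (by rw [Nat.sub_add_cancel (by omega)]; exact hcn.mul d)
    refine ⟨fun x hx => ⟨fun h => hS (h ▸ hcn.mod_mem hx), by have := hlt x hx; omega⟩,
      fun i j hi _ _ hx => ?_, fun j _ _ hj => hgap j hj⟩
    have : n ≤ i * n := Nat.le_mul_of_pos_left n hi
    have := hcn _ hx (by omega)
    rwa [Nat.sub_one_mul, show i * n - n + j = i * n + j - n by omega]
  · rintro ⟨hiv, hv, hvi⟩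
    have hcn : SubClosed S n := by
      intro b hb hnb
      have hdiv := Nat.div_add_mod' b n
      have hmod := Nat.mod_lt b (by omega : 0 < n)
      have hq : 1 ≤ b / n := Nat.div_pos hnb (by omega)
      have : n ≤ b / n * n := Nat.le_mul_of_pos_left n hq
      have := hv (b / n) (b % n) hq (Nat.pos_of_ne_zero (hiv b hb).1) (by omega) (by rwa [hdiv])
      rwa [Nat.sub_one_mul, show b / n * n - n + b % n = b - n by omega] at this
    refine ⟨fun b hb hb1 => ?_, hcn, fun b hb hb' => absurd hb' (by have := (hiv b hb).2; omega)⟩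
    have hsucc : (b + 1) % n = (b % n + 1) % n := by
      rw [Nat.add_mod, Nat.mod_eq_of_lt (by omega : 1 < n)]
    have hmod := Nat.mod_lt b (by omega : 0 < n)
    have hb1n : b % n + 1 < n := by
      by_contra h
      exact (hiv _ hb1).1 (by rw [hsucc, show b % n + 1 = n by omega, Nat.mod_self])
    rw [Nat.mod_eq_of_lt hb1n] at hsucc
    exact hvi (b % n) (Nat.pos_of_ne_zero (hiv b hb).1) (by omega) (hcn.mod_mem hb)
      (hsucc ▸ hcn.mod_mem hb1)

theorem stmt10 (n d : ℕ) (hn : 2 ≤ n) (hd : 1 ≤ d) (S : Finset ℕ) (hS : 0 ∉ S) :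
    (∃ Y : YoungDiagram, DistinctParts Y ∧ IsCore Y n ∧ IsCore Y (d * n - 1) ∧
        betaSet Y = S) ↔
      ((∀ x ∈ S, (∃ i j : ℕ, 1 ≤ i ∧ i ≤ d ∧ 1 ≤ j ∧ j ≤ n - 2 ∧ x = (i - 1) * n + j) ∨
          (∃ i : ℕ, 1 ≤ i ∧ i ≤ d - 1 ∧ x = i * n - 1)) ∧
       (∀ i j : ℕ, 1 ≤ i → 1 ≤ j → j ≤ n - 1 → i * n + j ∈ S → (i - 1) * n + j ∈ S) ∧
       (∀ j : ℕ, 1 ≤ j → j ≤ n - 2 → j ∈ S → j + 1 ∉ S)) := by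
  have hdn : 0 < d * n - 1 := by
    have : n ≤ d * n := Nat.le_mul_of_pos_left n hd
    omega
  rw [← noConsecutive_and_subClosed_iff hn hd hS]
  constructor
  · rintro ⟨Y, hdist, hcn, hcm, rfl⟩
    exact ⟨YoungDiagram.distinctParts_iff.mp hdist,
      (YoungDiagram.isCore_iff_subClosed (by omega)).mp hcn,
      (YoungDiagram.isCore_iff_subClosed hdn).mp hcm⟩
  · rintro ⟨hgap, hcn, hcm⟩
    obtain ⟨Y, rfl⟩ := YoungDiagram.exists_betaSet_eq hS
    exact ⟨Y, YoungDiagram.distinctParts_iff.mpr hgap,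
      (YoungDiagram.isCore_iff_subClosed (by omega)).mpr hcn,
      (YoungDiagram.isCore_iff_subClosed hdn).mpr hcm, rfl⟩
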